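/- arXiv:1706.07148 — 3 statements merged into one kernel-verified Lean document; each statement's English description precedes it below -/
import Mathlib

section
/- For m ≥ 2 and n with base m representation (α_j,...,α_0), the number c_m(n) of m-ary partitions of n without gaps satisfies c_m(n) = 1 + Σ_{r=1}^{j} Σ_{k_r=χ_r}^{⌊n/m^r⌋−1} Σ_{k_{r-1}=χ_{r-1}}^{α_{r-1}−1+m·k_r} ... Σ_{k_1=χ_1}^{α_1−1+m·k_2} 1, where χ_i = 0 if α_{i-1} > 0 and χ_i = 1 if α_{i-1} = 0. -/
noncomputable def cm (m n : ℕ) : ℕ :=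
  Nat.card {f : ℕ →₀ ℕ // (∑ i ∈ f.support, f i * m ^ i = n) ∧
    ∀ i k, f i ≠ 0 → k ≤ i → f k ≠ 0}

def chi (α : ℕ → ℕ) (i : ℕ) : ℕ := if α (i - 1) = 0 then 1 else 0

noncomputable def gsum (m : ℕ) (α : ℕ → ℕ) : ℕ → ℤ → ℕ
  | 0, _ => 1
  | t + 1, u => ∑ k ∈ Finset.Icc (chi α (t + 1) : ℤ) u, gsum m α t ((α t : ℤ) - 1 + m * k)

/-!
Sort the gapless partitions of `n` by their largest part `m ^ r`: the empty partition and those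
with `r = 0` together contribute exactly `1`. Removing the `c ≥ 1` copies of the largest part
`m ^ (t + 1)` from a gapless partition of `ρ + q * m ^ (t + 1)`, where `ρ < m ^ (t + 1)` is
formed by the digits `α 0, …, α t`, leaves a gapless partition of `ρ + k * m ^ (t + 1)` with
`k = q - c < q`, i.e. of a number with the same low digits `α 0, …, α (t - 1)` and quotient
`α t + m * k` by `m ^ t`. This is the recursion defining `gsum`; its lower bound `chi α (t + 1)`
drops `k = 0` exactly when `α t = 0`, where that number is below `m ^ t` and has no such
partition.
-/

open Finset Finsupp

section Digits

variable {m : ℕ} {α : ℕ → ℕ}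

theorem sum_range_mul_pow_lt {k : ℕ} (h : ∀ i < k, α i < m) :
    ∑ i ∈ range k, α i * m ^ i < m ^ k := by
  induction k with
  | zero => simp
  | succ k ih =>
    have hk : α k + 1 ≤ m := h k k.lt_add_one
    calc ∑ i ∈ range (k + 1), α i * m ^ i
        < m ^ k + α k * m ^ k := by
          rw [sum_range_succ]; gcongr; exact ih fun i hi => h i (by omega)
      _ = (α k + 1) * m ^ k := by ring
      _ ≤ m ^ (k + 1) := by rw [pow_succ']; gcongr

theorem sum_range_mul_pow_mod {r k : ℕ} (hrk : r ≤ k) (h : ∀ i < r, α i < m) :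
    (∑ i ∈ range k, α i * m ^ i) % m ^ r = ∑ i ∈ range r, α i * m ^ i := by
  obtain ⟨c, hc⟩ : m ^ r ∣ ∑ i ∈ Ico r k, α i * m ^ i :=
    dvd_sum fun i hi => (pow_dvd_pow m (mem_Ico.1 hi).1).mul_left _
  rw [← sum_range_add_sum_Ico _ hrk, hc, Nat.add_mul_mod_self_left,
    Nat.mod_eq_of_lt (sum_range_mul_pow_lt h)]

end Digits

theorem sum_Icc_natCast_sub_one {M : Type*} [AddCommMonoid M] (f : ℤ → M) (a b : ℕ) :
    ∑ k ∈ Icc (a : ℤ) (b - 1), f k = ∑ k ∈ Ico a b, f k := by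
  have hmap : Icc (a : ℤ) (b - 1) = (Ico a b).map Nat.castEmbedding := by
    ext k
    simp only [mem_Icc, mem_map, mem_Ico, Nat.castEmbedding_apply]
    exact ⟨fun hk => ⟨k.toNat, by omega, by omega⟩, by rintro ⟨k, hk, rfl⟩; omega⟩
  rw [hmap, sum_map]
  rfl

theorem gsum_succ_natCast_sub_one (m : ℕ) (α : ℕ → ℕ) (t q : ℕ) :
    gsum m α (t + 1) ((q : ℤ) - 1) =
      ∑ k ∈ Ico (chi α (t + 1)) q, gsum m α t (((α t + m * k : ℕ) : ℤ) - 1) := by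
  rw [gsum, sum_Icc_natCast_sub_one (fun k : ℤ => gsum m α t ((α t : ℤ) - 1 + m * k))]
  push_cast
  ring_nf

theorem Finsupp.weight_update_of_notMem {σ : Type*} (w : σ → ℕ) {f : σ →₀ ℕ} {s : σ}
    (hs : s ∉ f.support) (a : ℕ) : weight w (f.update s a) = weight w f + a * w s := by
  rw [update_eq_erase_add_single, erase_of_notMem_support hs, map_add, weight_single, smul_eq_mul]

theorem Finsupp.weight_erase_add {σ : Type*} (w : σ → ℕ) (f : σ →₀ ℕ) (s : σ) :
    weight w (f.erase s) + f s * w s = weight w f := by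
  conv_rhs => rw [← erase_add_single s f]
  rw [map_add, weight_single, smul_eq_mul]

/-- Multiplicity functions `f` (`f i` copies of the part `m ^ i`) of the `m`-ary partitions of `X`
whose parts are exactly `m ^ 0, …, m ^ (s - 1)`. -/
abbrev GaplessPartition (m s X : ℕ) : Type :=
  {f : ℕ →₀ ℕ // f.support = range s ∧ weight (m ^ ·) f = X}

namespace GaplessPartition

variable {m : ℕ}

theorem apply_top_ne_zero {s X : ℕ} (f : GaplessPartition m (s + 1) X) : f.1 s ≠ 0 :=
  mem_support_iff.1 (by rw [f.2.1]; exact self_mem_range_succ s)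

theorem apply_top_le {s ρ q : ℕ} (hρ : ρ < m ^ s)
    (f : GaplessPartition m (s + 1) (ρ + q * m ^ s)) : f.1 s ≤ q := by
  by_contra! h
  have h1 : (q + 1) * m ^ s ≤ f.1 s * m ^ s := Nat.mul_le_mul_right _ h
  have h2 := weight_erase_add (m ^ ·) f.1 s
  rw [f.2.2] at h2
  rw [add_one_mul] at h1
  omega

instance (X : ℕ) : Subsingleton (GaplessPartition m 0 X) :=
  ⟨fun f g => Subtype.ext <| by rw [support_eq_empty.1 f.2.1, support_eq_empty.1 g.2.1]⟩

theorem card_zero (X : ℕ) : Nat.card (GaplessPartition m 0 X) = if X = 0 then 1 else 0 := by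
  split_ifs with hX
  · exact Nat.card_eq_one_iff_exists.2
      ⟨⟨0, by simp, by simp [hX]⟩, fun _ => Subsingleton.elim _ _⟩
  · refine Nat.card_eq_zero.2 (Or.inl ⟨fun f => hX ?_⟩)
    rw [← f.2.2, support_eq_empty.1 f.2.1, map_zero]

theorem card_eq_zero_of_lt {s X : ℕ} (hX : X < m ^ s) :
    Nat.card (GaplessPartition m (s + 1) X) = 0 :=
  Nat.card_eq_zero.2 <| Or.inl ⟨fun f =>
    (le_weight_of_ne_zero' (m ^ ·) (apply_top_ne_zero f)).not_gt (by rwa [f.2.2])⟩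

noncomputable def equivSigma {s ρ : ℕ} (hρ : ρ < m ^ s) (q : ℕ) :
    GaplessPartition m (s + 1) (ρ + q * m ^ s) ≃
      Σ k : Fin q, GaplessPartition m s (ρ + k * m ^ s) where
  toFun f :=
    have hle := apply_top_le hρ f
    ⟨⟨q - f.1 s, by have := apply_top_ne_zero f; omega⟩, f.1.erase s, by
      rw [support_erase, f.2.1, range_add_one, erase_insert notMem_range_self], by
      have h1 := weight_erase_add (m ^ ·) f.1 s
      have h2 : (q - f.1 s) * m ^ s + f.1 s * m ^ s = q * m ^ s := by
        rw [← add_mul, Nat.sub_add_cancel hle]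
      rw [f.2.2] at h1
      dsimp only
      omega⟩
  invFun g := ⟨g.2.1.update s (q - g.1), by
      rw [support_update_ne_zero _ _ (by omega), g.2.2.1, range_add_one], by
      rw [weight_update_of_notMem _ (by simp [g.2.2.1]), g.2.2.2, add_assoc, ← add_mul,
        Nat.add_sub_cancel' g.1.2.le]⟩
  left_inv f := Subtype.ext <| by
    simp only [update_erase_eq_update, Nat.sub_sub_self (apply_top_le hρ f), update_self]
  right_inv g := Sigma.subtype_ext (Fin.ext (by simp; omega)) (by
    simp [erase_update_eq_erase, erase_of_notMem_support, g.2.2.1])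

theorem finite (hm : 0 < m) (s X : ℕ) : Finite (GaplessPartition m s X) := by
  induction s generalizing X with
  | zero => infer_instance
  | succ s ih =>
    rw [← Nat.mod_add_div' X (m ^ s)]
    exact Finite.of_equiv _ (equivSigma (Nat.mod_lt _ (by positivity)) _).symm

theorem card_succ (hm : 0 < m) {s ρ : ℕ} (hρ : ρ < m ^ s) (q : ℕ) :
    Nat.card (GaplessPartition m (s + 1) (ρ + q * m ^ s)) =
      ∑ k ∈ range q, Nat.card (GaplessPartition m s (ρ + k * m ^ s)) := by
  have := finite hm s
  rw [Nat.card_congr (equivSigma hρ q), Nat.card_sigma,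
    Fin.sum_univ_eq_sum_range (fun k => Nat.card (GaplessPartition m s (ρ + k * m ^ s)))]

theorem card_one (hm : 0 < m) {X : ℕ} (hX : 0 < X) : Nat.card (GaplessPartition m 1 X) = 1 := by
  simpa [card_zero, hX] using card_succ hm (s := 0) (ρ := 0) (by simp) X

theorem card_zero_add_card_one (hm : 0 < m) (X : ℕ) :
    Nat.card (GaplessPartition m 0 X) + Nat.card (GaplessPartition m 1 X) = 1 := by
  rcases Nat.eq_zero_or_pos X with rfl | hX
  · rw [card_zero, if_pos rfl, card_eq_zero_of_lt (by simp)]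
  · rw [card_zero, if_neg hX.ne', card_one hm hX]

theorem card_eq_gsum (hm : 0 < m) {α : ℕ → ℕ} {t : ℕ} (hα : ∀ i < t, α i < m) {q : ℕ}
    (hq : 0 < t ∨ 0 < q) :
    Nat.card (GaplessPartition m (t + 1) (∑ i ∈ range t, α i * m ^ i + q * m ^ t)) =
      gsum m α t ((q : ℤ) - 1) := by
  induction t generalizing q with
  | zero => simpa [gsum] using card_one hm (by omega : 0 < q)
  | succ t ih =>
    set ρ := ∑ i ∈ range t, α i * m ^ i
    have hρ : ρ < m ^ t := sum_range_mul_pow_lt fun i hi => hα i (by omega)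
    have hchi : chi α (t + 1) = if α t = 0 then 1 else 0 := rfl
    calc Nat.card
          (GaplessPartition m (t + 2) (∑ i ∈ range (t + 1), α i * m ^ i + q * m ^ (t + 1)))
        = ∑ k ∈ range q,
            Nat.card (GaplessPartition m (t + 1) (ρ + (α t + m * k) * m ^ t)) := by
          rw [card_succ hm (sum_range_mul_pow_lt hα)]
          refine sum_congr rfl fun k _ => ?_
          rw [sum_range_succ]
          congr 2
          ring
      _ = ∑ k ∈ Ico (chi α (t + 1)) q,
            Nat.card (GaplessPartition m (t + 1) (ρ + (α t + m * k) * m ^ t)) := by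
          -- the term `k = 0` is skipped only when `α t = 0`, and it vanishes since `ρ < m ^ t`
          refine (sum_subset (fun k hk => mem_range.2 (mem_Ico.1 hk).2) fun k hk hk' => ?_).symm
          have hk0 : k = 0 ∧ α t = 0 := by
            simp only [mem_range, mem_Ico, hchi] at hk hk'
            split_ifs at hk' <;> omega
          rw [hk0.1, hk0.2, mul_zero, add_zero, zero_mul, add_zero]
          exact card_eq_zero_of_lt hρ
      _ = ∑ k ∈ Ico (chi α (t + 1)) q, gsum m α t (((α t + m * k : ℕ) : ℤ) - 1) := by
          refine sum_congr rfl fun k hk => ih (fun i hi => hα i (by omega)) (Or.inr ?_)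
          have hk1 := (mem_Ico.1 hk).1
          rw [hchi] at hk1
          split_ifs at hk1 with h
          · exact Nat.add_pos_right _ (Nat.mul_pos hm hk1)
          · omega
      _ = gsum m α (t + 1) ((q : ℤ) - 1) := (gsum_succ_natCast_sub_one m α t q).symm

theorem card_eq_gsum_div (hm : 0 < m) {α : ℕ → ℕ} {n j r : ℕ} (hd : ∀ i ≤ j, α i < m)
    (hn : n = ∑ i ∈ range (j + 1), α i * m ^ i) (hr : 0 < r) (hrj : r ≤ j + 1) :
    Nat.card (GaplessPartition m (r + 1) n) = gsum m α r (((n / m ^ r : ℕ) : ℤ) - 1) := by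
  have hα : ∀ i < r, α i < m := fun i hi => hd i (by omega)
  have hlow : n % m ^ r = ∑ i ∈ range r, α i * m ^ i := hn ▸ sum_range_mul_pow_mod hrj hα
  rw [← card_eq_gsum hm hα (Or.inl hr), ← hlow, Nat.mod_add_div']

theorem le_of_lt_pow (hm : 1 < m) {s j X : ℕ} (hX : X < m ^ j) (f : GaplessPartition m s X) :
    s ≤ j := by
  cases s with
  | zero => exact j.zero_le
  | succ s =>
    have := (le_weight_of_ne_zero' (m ^ ·) (apply_top_ne_zero f)).trans_lt (f.2.2 ▸ hX)
    exact (Nat.pow_lt_pow_iff_right hm).1 this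

end GaplessPartition

theorem Finset.eq_range_card_of_forall_le_mem {S : Finset ℕ}
    (hS : ∀ i ∈ S, ∀ k ≤ i, k ∈ S) : S = range #S := by
  refine eq_of_subset_of_card_le (fun i hi => mem_range.2 ?_) (card_range _).le
  have : range (i + 1) ⊆ S := fun k hk => hS i hi k (Nat.lt_succ_iff.1 (mem_range.1 hk))
  simpa using card_le_card this

noncomputable def gaplessEquivSigma {m n j : ℕ} (hm : 1 < m) (hn : n < m ^ j) :
    {f : ℕ →₀ ℕ // (∑ i ∈ f.support, f i * m ^ i = n) ∧
      ∀ i k, f i ≠ 0 → k ≤ i → f k ≠ 0} ≃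
      Σ s : Fin (j + 1), GaplessPartition m s n where
  toFun f :=
    have hf : f.1.support = range #f.1.support := eq_range_card_of_forall_le_mem fun i hi k hk =>
      mem_support_iff.2 (f.2.2 i k (mem_support_iff.1 hi) hk)
    ⟨⟨#f.1.support,
      Nat.lt_succ_of_le (GaplessPartition.le_of_lt_pow hm hn ⟨f.1, hf, f.2.1⟩)⟩, f.1, hf, f.2.1⟩
  invFun g := ⟨g.2.1, g.2.2.2, fun i k hi hk => by
    rw [ne_eq, ← notMem_support_iff, not_not, g.2.2.1, mem_range] at hi ⊢
    omega⟩
  left_inv f := rfl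
  right_inv g := Sigma.subtype_ext (Fin.ext (by simp [g.2.2.1])) rfl

theorem cm_eq_sum_card {m n j : ℕ} (hm : 1 < m) (hn : n < m ^ j) :
    cm m n = ∑ s ∈ range (j + 1), Nat.card (GaplessPartition m s n) := by
  have := GaplessPartition.finite (m := m) (by omega)
  rw [cm, Nat.card_congr (gaplessEquivSigma hm hn), Nat.card_sigma,
    Fin.sum_univ_eq_sum_range (fun s => Nat.card (GaplessPartition m s n))]

theorem cm_enumeration_general (m n j : ℕ) (α : ℕ → ℕ) (hm : 2 ≤ m) (hd : ∀ i, i ≤ j → α i < m)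
    (hn : n = ∑ i ∈ Finset.range (j + 1), α i * m ^ i) :
    cm m n = 1 + ∑ r ∈ Finset.Icc 1 j, gsum m α r (((n / m ^ r : ℕ) : ℤ) - 1) := by
  have hlt : n < m ^ (j + 1) := hn ▸ sum_range_mul_pow_lt fun i hi => hd i (by omega)
  rw [cm_eq_sum_card hm hlt, sum_range_succ', Nat.range_succ_eq_Icc_zero,
    ← insert_Icc_add_one_left_eq_Icc j.zero_le, sum_insert (by simp), zero_add, add_comm,
    ← add_assoc, GaplessPartition.card_zero_add_card_one (by omega)]
  refine congrArg _ (sum_congr rfl fun r hr => ?_)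
  exact GaplessPartition.card_eq_gsum_div (by omega) hd hn (mem_Icc.1 hr).1
    ((mem_Icc.1 hr).2.trans j.le_succ)

theorem cm_enumeration (m n j : ℕ) (α : ℕ → ℕ) (hm : 2 ≤ m) (hj : 0 < α j) (hd : ∀ i, i ≤ j → α i < m)
    (hn : n = ∑ i ∈ Finset.range (j + 1), α i * m ^ i) :
    cm m n = 1 + ∑ r ∈ Finset.Icc 1 j, gsum m α r (((n / m ^ r : ℕ) : ℤ) - 1) :=
  cm_enumeration_general m n j α hm hd hn
end

section
/- For m ≥ 2 and n ≥ 1 with base m expansion n = Σ_{i≥ℓ} α_i·m^i where α_ℓ ≥ 1 is the lowest nonzero digit: if ℓ = 0 (i.e., m does not divide n) then c_m(mn) ≡ α_0 + (α_0 − 1)·Σ_{i=1}^{∞} α_1·α_2···α_i (mod m). -/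
open Finset

@[to_additive sum_Icc_one_eq_sum_range]
lemma Finset.prod_Icc_one_eq_prod_range {M : Type*} [CommMonoid M] (f : ℕ → M) (n : ℕ) :
    ∏ t ∈ Icc 1 n, f t = ∏ t ∈ range n, f (t + 1) := by
  rw [range_eq_Ico, prod_Ico_add' f 0 n 1, zero_add, Ico_add_one_right_eq_Icc]

lemma sum_range_succ_mul_pow (m d : ℕ) (γ : ℕ → ℕ) :
    ∑ i ∈ range (d + 1), γ i * m ^ i = m * ∑ i ∈ range d, γ (i + 1) * m ^ i + γ 0 := by
  rw [sum_range_succ', mul_sum]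
  simp only [pow_succ, pow_zero, mul_one]
  congr 1
  exact sum_congr rfl fun i _ => by ring

namespace Finsupp

noncomputable def natTail (f : ℕ →₀ ℕ) : ℕ →₀ ℕ :=
  comapDomain (· + 1) f (add_left_injective 1).injOn

noncomputable def natCons (c : ℕ) (g : ℕ →₀ ℕ) : ℕ →₀ ℕ :=
  single 0 c + embDomain (addRightEmbedding 1) g

@[simp]
lemma natTail_apply (f : ℕ →₀ ℕ) (i : ℕ) : natTail f i = f (i + 1) := rfl

@[simp]
lemma natCons_zero (c : ℕ) (g : ℕ →₀ ℕ) : natCons c g 0 = c := by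
  simp [natCons, embDomain_of_notMem_range]

@[simp]
lemma natCons_succ (c : ℕ) (g : ℕ →₀ ℕ) (i : ℕ) : natCons c g (i + 1) = g i := by
  simpa [natCons] using embDomain_apply_self (addRightEmbedding 1) g i

@[simp]
lemma natTail_natCons (c : ℕ) (g : ℕ →₀ ℕ) : natTail (natCons c g) = g := by
  ext i; simp

lemma natCons_natTail (f : ℕ →₀ ℕ) : natCons (f 0) (natTail f) = f := by
  ext (_ | i) <;> simp

end Finsupp

section GapFree

open Finsupp

/-- `f i` is the multiplicity of the part `m ^ i`. -/
def mArySum (m : ℕ) (f : ℕ →₀ ℕ) : ℕ := f.sum fun i a => a * m ^ i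

def IsGapFree (f : ℕ →₀ ℕ) : Prop := ∀ i k, f i ≠ 0 → k ≤ i → f k ≠ 0

abbrev GapFreePartition (m n : ℕ) : Type := {f : ℕ →₀ ℕ // mArySum m f = n ∧ IsGapFree f}

lemma cm_eq_card (m n : ℕ) : cm m n = Nat.card (GapFreePartition m n) := rfl

lemma mArySum_natCons (m c : ℕ) (g : ℕ →₀ ℕ) :
    mArySum m (natCons c g) = c + m * mArySum m g := by
  rw [mArySum, natCons, sum_add_index' (by simp) (by intros; ring), sum_single_index (by simp),
    sum_embDomain, mArySum, Finsupp.mul_sum]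
  simp only [addRightEmbedding_apply, pow_zero, mul_one, pow_succ]
  congr 1
  exact sum_congr fun i _ => by ring

lemma mArySum_eq_add_mul_natTail (m : ℕ) (f : ℕ →₀ ℕ) : mArySum m f = f 0 + m * mArySum m (natTail f) := by
  conv_lhs => rw [← natCons_natTail f, mArySum_natCons]

lemma IsGapFree.natTail {f : ℕ →₀ ℕ} (hf : IsGapFree f) : IsGapFree (natTail f) :=
  fun i k hi hk => hf (i + 1) (k + 1) hi (by omega)

lemma IsGapFree.natCons {c : ℕ} {g : ℕ →₀ ℕ} (hc : c ≠ 0) (hg : IsGapFree g) :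
    IsGapFree (natCons c g) := by
  rintro (_ | i) (_ | k) hi hk
  · simpa
  · omega
  · simpa
  · simpa using hg i k (by simpa using hi) (by omega)

lemma IsGapFree.eq_zero {f : ℕ →₀ ℕ} (hf : IsGapFree f) (h : f 0 = 0) : f = 0 := by
  ext i; by_contra hi; exact hf i 0 hi i.zero_le h

lemma GapFreePartition.apply_zero_ne_zero {m n : ℕ} (f : GapFreePartition m n) (hn : n ≠ 0) :
    f.1 0 ≠ 0 := fun h => hn (by rw [← f.2.1, f.2.2.eq_zero h, mArySum, sum_zero_index])

lemma cm_zero (m : ℕ) : cm m 0 = 1 := by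
  have eq_zero (f : GapFreePartition m 0) : f.1 = 0 :=
    f.2.2.eq_zero (by have := mArySum_eq_add_mul_natTail m f.1; rw [f.2.1] at this; omega)
  rw [cm_eq_card, Nat.card_eq_one_iff_unique]
  exact ⟨⟨fun f g => Subtype.ext ((eq_zero f).trans (eq_zero g).symm)⟩,
    ⟨⟨0, by simp [mArySum], fun i _ h => absurd rfl h⟩⟩⟩

noncomputable def gapFreePartitionEquivSigma {m q s : ℕ} (hs : 0 < s) (hsm : s ≤ m) :
    GapFreePartition m (m * q + s) ≃ Σ a : Fin (q + 1), GapFreePartition m a where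
  toFun f := ⟨⟨mArySum m (natTail f.1), by
      have h0 := f.apply_zero_ne_zero (by omega)
      have h := mArySum_eq_add_mul_natTail m f.1
      rw [f.2.1] at h
      exact Nat.lt_of_mul_lt_mul_left (a := m) (by rw [mul_add, mul_one]; omega)⟩,
    natTail f.1, rfl, f.2.2.natTail⟩
  invFun x := ⟨natCons (m * q + s - m * x.1) x.2.1, by
      have := Nat.mul_le_mul_left m (Nat.lt_succ_iff.mp x.1.2)
      rw [mArySum_natCons, x.2.2.1]; omega,
    IsGapFree.natCons (by have := Nat.mul_le_mul_left m (Nat.lt_succ_iff.mp x.1.2); omega) x.2.2.2⟩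
  left_inv f := Subtype.ext <| by
    have h := mArySum_eq_add_mul_natTail m f.1
    rw [f.2.1] at h
    dsimp only
    rw [show m * q + s - m * mArySum m (natTail f.1) = f.1 0 by omega, natCons_natTail]
  right_inv x := Sigma.subtype_ext (Fin.ext (by simp [x.2.2.1])) (natTail_natCons _ _)

lemma exists_eq_mul_add_of_pos {m n : ℕ} (hm : 0 < m) (hn : 0 < n) :
    ∃ q s, 0 < s ∧ s ≤ m ∧ n = m * q + s :=
  ⟨(n - 1) / m, (n - 1) % m + 1, by omega, Nat.mod_lt _ hm, by
    have := Nat.div_add_mod (n - 1) m; omega⟩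

lemma finite_gapFreePartition {m : ℕ} (hm : 0 < m) (n : ℕ) : Finite (GapFreePartition m n) := by
  induction n using Nat.strong_induction_on with
  | _ n ih =>
  rcases Nat.eq_zero_or_pos n with rfl | hn
  · exact Nat.finite_of_card_ne_zero (by rw [← cm_eq_card, cm_zero]; exact one_ne_zero)
  · obtain ⟨q, s, hs, hsm, rfl⟩ := exists_eq_mul_add_of_pos hm hn
    have (a : Fin (q + 1)) : Finite (GapFreePartition m a) :=
      ih a (by have := Nat.le_mul_of_pos_left q hm; omega)
    exact Finite.of_equiv _ (gapFreePartitionEquivSigma hs hsm).symm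

end GapFree

noncomputable def cmSum (m n : ℕ) : ℕ := ∑ k ∈ range n, cm m k

lemma cm_mul_add {m q s : ℕ} (hs : 0 < s) (hsm : s ≤ m) : cm m (m * q + s) = cmSum m (q + 1) := by
  have := finite_gapFreePartition (hs.trans_le hsm)
  rw [cm_eq_card, Nat.card_congr (gapFreePartitionEquivSigma hs hsm), Nat.card_sigma, cmSum,
    ← Fin.sum_univ_eq_sum_range]
  rfl

lemma cmSum_succ (m n : ℕ) : cmSum m (n + 1) = cmSum m n + cm m n := sum_range_succ _ _

lemma cm_mul {m n : ℕ} (hm : 0 < m) (hn : 0 < n) : cm m (m * n) = cmSum m n := by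
  obtain ⟨q, rfl⟩ := Nat.exists_eq_add_one_of_ne_zero hn.ne'
  rw [mul_add_one]
  exact cm_mul_add hm le_rfl

lemma cmSum_mul_add_add_one {m n t : ℕ} (ht : t ≤ m) :
    cmSum m (m * n + t + 1) = cmSum m (m * n + 1) + t * cmSum m (n + 1) := by
  induction t with
  | zero => simp
  | succ t ih => rw [cmSum_succ, cm_mul_add t.succ_pos ht, ← add_assoc, ih (by omega)]; ring

lemma cmSum_mul_add_one_cast (m n : ℕ) : (cmSum m (m * n + 1) : ZMod m) = 1 := by
  induction n with
  | zero => simp [cmSum, cm_zero]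
  | succ n ih =>
    rw [mul_add_one, cmSum_mul_add_add_one le_rfl]
    push_cast
    rw [ih, ZMod.natCast_self, zero_mul, add_zero]

lemma cmSum_mul_add_add_one_cast {m n t : ℕ} (ht : t ≤ m) :
    (cmSum m (m * n + t + 1) : ZMod m) = 1 + t * cmSum m (n + 1) := by
  rw [cmSum_mul_add_add_one ht]
  push_cast
  rw [cmSum_mul_add_one_cast]

lemma cmSum_one_add_digits_cast {m : ℕ} (d : ℕ) (γ : ℕ → ℕ) (hγ : ∀ i < d, γ i ≤ m) :
    (cmSum m (1 + ∑ i ∈ range d, γ i * m ^ i) : ZMod m) =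
      1 + ∑ i ∈ range d, ∏ t ∈ range (i + 1), (γ t : ZMod m) := by
  induction d generalizing γ with
  | zero => simp [cmSum, cm_zero]
  | succ d ih =>
    rw [sum_range_succ_mul_pow, add_comm 1, cmSum_mul_add_add_one_cast (hγ 0 d.succ_pos),
      add_comm _ 1, ih _ fun i hi => hγ (i + 1) (by omega), sum_range_succ']
    simp_rw [prod_range_succ' _ (_ + 1), ← sum_mul]
    rw [zero_add, prod_range_one]
    ring

theorem cm_congruence_ell_zero_general (m n j : ℕ) (α : ℕ → ℕ) (hd : ∀ i, i ≤ j → α i < m)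
    (hn : n = ∑ i ∈ Finset.range (j + 1), α i * m ^ i)
    (h0 : 0 < α 0) :
    (cm m (m * n) : ℤ) ≡ (α 0 : ℤ) + ((α 0 : ℤ) - 1) *
      ∑ i ∈ Finset.Icc 1 j, ∏ t ∈ Finset.Icc 1 i, (α t : ℤ) [ZMOD (m : ℤ)] := by
  have hm : 0 < m := (Nat.zero_le _).trans_lt (hd 0 j.zero_le)
  obtain ⟨r, hr⟩ := Nat.exists_eq_add_one_of_ne_zero h0.ne'
  have hrm : r ≤ m := by have := hd 0 j.zero_le; omega
  rw [sum_range_succ_mul_pow, hr, ← add_assoc] at hn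
  rw [← ZMod.intCast_eq_intCast_iff, hn, cm_mul hm (by omega), sum_Icc_one_eq_sum_range]
  simp_rw [prod_Icc_one_eq_prod_range]
  push_cast
  rw [cmSum_mul_add_add_one_cast hrm, add_comm _ 1,
    cmSum_one_add_digits_cast j _ fun i hi => (hd (i + 1) hi).le, hr]
  push_cast
  ring

theorem cm_congruence_ell_zero (m n j : ℕ) (α : ℕ → ℕ) (hm : 2 ≤ m) (hj : 0 < α j) (hd : ∀ i, i ≤ j → α i < m)
    (hn : n = ∑ i ∈ Finset.range (j + 1), α i * m ^ i)
    (hz : ∀ i, j < i → α i = 0) (h0 : 0 < α 0) :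
    (cm m (m * n) : ℤ) ≡ (α 0 : ℤ) + ((α 0 : ℤ) - 1) *
      ∑ i ∈ Finset.Icc 1 j, ∏ t ∈ Finset.Icc 1 i, (α t : ℤ) [ZMOD (m : ℤ)] :=
  cm_congruence_ell_zero_general m n j α hd hn h0
end

section
/- For m ≥ 2 and n with base m representation (α_j,...,α_0), if m divides n (i.e., α_0 = 0), then b_m(mn) ≡ ∏_{i=1}^{j}(α_i + 1) (mod m), i.e., the digit α_0 = 0 contributes a factor of 1. -/
/-!
Splitting off the parts equal to `1` shows `b_m(n) = ∑_{k ≤ n / m} b_m(k)`. Hence `b_m` is constant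
on each block `mq, …, mq + m - 1`, so that `b_m(m(ma + r)) = m ∑_{q < a} b_m(mq) + (r + 1) b_m(ma)`
for `r < m`, which is `(r + 1) b_m(ma)` modulo `m`. Peeling off the base `m` digits of `n` one at a
time turns `b_m(mn)` into the product of the `α_i + 1`.
-/

noncomputable def bm (m n : ℕ) : ℕ :=
  Nat.card {f : ℕ →₀ ℕ // ∑ i ∈ f.support, f i * m ^ i = n}

open Finsupp Finset

noncomputable def Finsupp.natConsEquiv {M : Type*} [AddCommMonoid M] :
    (ℕ →₀ M) ≃ M × (ℕ →₀ M) where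
  toFun f := (f 0, f.comapDomain Nat.succ Nat.succ_injective.injOn)
  invFun p := single 0 p.1 + p.2.mapDomain Nat.succ
  left_inv f := by
    ext (_ | i)
    · simp [mapDomain_of_notMem_range]
    · simp [mapDomain_apply Nat.succ_injective]
  right_inv p := by
    ext
    · simp [mapDomain_of_notMem_range]
    · simp [mapDomain_apply Nat.succ_injective]

section

variable {m : ℕ}

theorem bm_eq_card_weight (n : ℕ) :
    bm m n = Nat.card {f : ℕ →₀ ℕ // weight (m ^ ·) f = n} := by
  simp [bm, weight_apply, Finsupp.sum]

theorem weight_pow_natConsEquiv_symm (a : ℕ) (g : ℕ →₀ ℕ) :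
    weight (m ^ ·) (natConsEquiv.symm (a, g)) = a + m * weight (m ^ ·) g := by
  rw [natConsEquiv, Equiv.coe_fn_symm_mk, map_add, weight_single, weight_apply, weight_apply,
    sum_mapDomain_index (h := fun i c => c • m ^ i) (fun _ => zero_smul _ _)
      (fun _ _ _ => add_smul _ _ _), Finsupp.mul_sum]
  simp only [pow_zero, smul_eq_mul, mul_one, pow_succ]
  congr 1
  exact Finsupp.sum_congr fun _ _ => by ring

theorem weight_pow_eq_apply_zero_add (f : ℕ →₀ ℕ) :
    weight (m ^ ·) f = f 0 + m * weight (m ^ ·) (natConsEquiv f).2 := by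
  conv_lhs => rw [← natConsEquiv.symm_apply_apply f]
  exact weight_pow_natConsEquiv_symm _ _

theorem finite_weight_pow_eq (hm : 1 < m) (n : ℕ) :
    Finite {f : ℕ →₀ ℕ // weight (m ^ ·) f = n} := by
  refine Set.Finite.to_subtype <| (range (n + 1)).finsupp (fun _ => range (n + 1)) |>.finite_toSet
    |>.subset fun f (hf : weight (m ^ ·) f = n) => ?_
  rw [mem_coe, mem_finsupp_iff]
  refine ⟨fun i hi => ?_, fun i _ => ?_⟩
  · have : m ^ i ≤ n := hf ▸ le_weight_of_ne_zero' _ (mem_support_iff.1 hi)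
    have := Nat.lt_pow_self (n := i) hm
    rw [mem_range]
    omega
  · rw [mem_range, Nat.lt_succ_iff, ← hf]
    exact le_weight _ (pow_ne_zero _ (by omega)) f

noncomputable def weightPowEqEquivSigma (hm : 0 < m) (n : ℕ) :
    {f : ℕ →₀ ℕ // weight (m ^ ·) f = n} ≃
      Σ k : Fin (n / m + 1), {g : ℕ →₀ ℕ // weight (m ^ ·) g = k} where
  toFun f := ⟨⟨weight (m ^ ·) (natConsEquiv f.1).2, by
      have := weight_pow_eq_apply_zero_add (m := m) f.1
      rw [Nat.lt_succ_iff, Nat.le_div_iff_mul_le hm]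
      linarith [f.2]⟩, ⟨(natConsEquiv f.1).2, rfl⟩⟩
  invFun p := ⟨natConsEquiv.symm (n - m * p.1, p.2.1), by
      have := (Nat.le_div_iff_mul_le hm).1 (Nat.lt_succ_iff.1 p.1.2)
      rw [weight_pow_natConsEquiv_symm, p.2.2, mul_comm]
      omega⟩
  left_inv f := by
    have := weight_pow_eq_apply_zero_add (m := m) f.1
    rw [f.2] at this
    refine Subtype.ext ?_
    show natConsEquiv.symm (n - m * _, _) = _
    conv_rhs => rw [← natConsEquiv.symm_apply_apply f.1]
    congr 2
    dsimp only
    omega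
  right_inv p := Sigma.subtype_ext (Fin.ext (by simp [p.2.2])) (by simp)

theorem bm_eq_sum_range (hm : 1 < m) (n : ℕ) : bm m n = ∑ k ∈ range (n / m + 1), bm m k := by
  have := finite_weight_pow_eq hm
  simp only [bm_eq_card_weight]
  rw [Nat.card_congr (weightPowEqEquivSigma (by omega) n), Nat.card_sigma,
    Fin.sum_univ_eq_sum_range (fun k => Nat.card {g : ℕ →₀ ℕ // weight (m ^ ·) g = k})]

theorem bm_zero (hm : 0 < m) : bm m 0 = 1 := by
  rw [bm_eq_card_weight, Nat.card_eq_one_iff_exists]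
  refine ⟨⟨0, map_zero _⟩, fun ⟨f, hf⟩ => Subtype.ext <| Finsupp.ext fun i => ?_⟩
  by_contra h
  have := hf ▸ le_weight_of_ne_zero' (m ^ ·) h
  exact (pow_pos hm i).ne' (Nat.le_zero.1 this)

theorem bm_mul_add (hm : 1 < m) (q : ℕ) {r : ℕ} (hr : r < m) :
    bm m (m * q + r) = ∑ k ∈ range (q + 1), bm m k := by
  rw [bm_eq_sum_range hm, Nat.mul_add_div (by omega), Nat.div_eq_of_lt hr, add_zero]

theorem bm_mul_add_eq_bm_mul (hm : 1 < m) (q : ℕ) {r : ℕ} (hr : r < m) :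
    bm m (m * q + r) = bm m (m * q) := by
  rw [bm_mul_add hm q hr, ← bm_mul_add hm q (r := 0) (by omega), add_zero]

theorem sum_range_mul_bm (hm : 1 < m) (a : ℕ) :
    ∑ k ∈ range (m * a), bm m k = m * ∑ q ∈ range a, bm m (m * q) := by
  induction a with
  | zero => simp
  | succ a ih =>
    rw [mul_add_one, sum_range_add, ih, sum_range_succ, mul_add,
      sum_congr rfl fun s hs => bm_mul_add_eq_bm_mul hm a (mem_range.1 hs), sum_const, card_range,
      smul_eq_mul]

theorem bm_mul_mul_add_modEq (hm : 1 < m) (a : ℕ) {r : ℕ} (hr : r < m) :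
    bm m (m * (m * a + r)) ≡ (r + 1) * bm m (m * a) [MOD m] := by
  have : bm m (m * (m * a + r)) = m * ∑ q ∈ range a, bm m (m * q) + (r + 1) * bm m (m * a) := by
    rw [← add_zero (m * _), bm_mul_add hm _ (by omega), add_assoc, sum_range_add,
      sum_range_mul_bm hm, sum_congr rfl fun s hs => bm_mul_add_eq_bm_mul hm a (by
        rw [mem_range] at hs; omega), sum_const, card_range, smul_eq_mul]
  rw [this]
  exact Nat.mul_add_mod_self_left _ _ _

theorem bm_mul_sum_digits_modEq (hm : 1 < m) (k : ℕ) (β : ℕ → ℕ) (hβ : ∀ i < k, β i < m) :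
    bm m (m * ∑ i ∈ range k, β i * m ^ i) ≡ ∏ i ∈ range k, (β i + 1) [MOD m] := by
  induction k generalizing β with
  | zero => rw [sum_range_zero, prod_range_zero, mul_zero, bm_zero (by omega)]
  | succ k ih =>
    have hsum : ∑ i ∈ range (k + 1), β i * m ^ i = m * ∑ i ∈ range k, β (i + 1) * m ^ i + β 0 := by
      rw [sum_range_succ', Finset.mul_sum]
      simp only [pow_succ, pow_zero, mul_one]
      exact congrArg (· + β 0) (sum_congr rfl fun _ _ => by ring)
    rw [hsum, prod_range_succ', mul_comm _ (β 0 + 1)]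
    exact (bm_mul_mul_add_modEq hm _ (hβ 0 (by omega))).trans
      ((ih (fun i => β (i + 1)) fun i hi => hβ (i + 1) (by omega)).mul_left _)

end

theorem bm_congruence_div_general (m n j : ℕ) (α : ℕ → ℕ) (hm : 2 ≤ m) (hd : ∀ i, i ≤ j → α i < m)
    (hn : n = ∑ i ∈ Finset.range (j + 1), α i * m ^ i) (h0 : α 0 = 0) :
    bm m (m * n) ≡ ∏ i ∈ Finset.Icc 1 j, (α i + 1) [MOD m] := by
  have := bm_mul_sum_digits_modEq hm (j + 1) α fun i hi => hd i (by omega)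
  rwa [← hn, prod_range_eq_mul_Ico _ (by omega : 0 < j + 1), h0, zero_add, one_mul,
    Ico_add_one_right_eq_Icc] at this

theorem bm_congruence_div (m n j : ℕ) (α : ℕ → ℕ) (hm : 2 ≤ m) (hj : 0 < α j) (hd : ∀ i, i ≤ j → α i < m)
    (hn : n = ∑ i ∈ Finset.range (j + 1), α i * m ^ i) (h0 : α 0 = 0) :
    bm m (m * n) ≡ ∏ i ∈ Finset.Icc 1 j, (α i + 1) [MOD m] :=
  bm_congruence_div_general m n j α hm hd hn h0
end
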